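/- Suppose q/p is not a root of unity and a ∈ ℂ with a ≠ −1/(p−q). If M_{a,b} possesses a ℂ-subspace U with L_n U ⊆ U for all n ∈ ℤ and 0 ≠ U ≠ M_{a,b}, then there exists m ∈ ℤ such that a = −p^{−m}[m]_{p,q} and either b = −p^{−m} q^m or b = 0. -/

import Mathlib

/-- The `(p,q)`-quantum integer `[n]_{p,q} = (p^n - q^n)/(p - q)`. -/
noncomputable def qint (p q : ℂ) (n : ℤ) : ℂ := (p ^ n - q ^ n) / (p - q)

/-- The structure constant `c^{a,b}_n(k) = p^{-k}[k] - a p^{-k} q^k - b p^{-k-n} q^k [n]`. -/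
noncomputable def cab (p q a b : ℂ) (n k : ℤ) : ℂ :=
  p ^ (-k) * qint p q k - a * p ^ (-k) * q ^ k - b * p ^ (-k - n) * q ^ k * qint p q n

/-- The operator `L_n` on `M_{a,b}`, realized on `ℤ →₀ ℂ` (basis `v_k = single k 1`),
`L_n v_k = c^{a,b}_n(k) v_{k+n}`. -/
noncomputable def Lab (p q a b : ℂ) (n : ℤ) : (ℤ →₀ ℂ) →ₗ[ℂ] (ℤ →₀ ℂ) :=
  Finsupp.lsum ℂ fun k => cab p q a b n k • Finsupp.lsingle (k + n)

/-- The defining relation of a `V_{p,q}`-module. -/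
def IsVpqModule (p q : ℂ) {M : Type} [AddCommGroup M] [Module ℂ M]
    (L : ℤ → M →ₗ[ℂ] M) : Prop :=
  ∀ m n : ℤ, ∀ v : M,
    (p ^ (-n) * q ^ n) • L n (L m v) - (p ^ (-m) * q ^ m) • L m (L n v) =
      (qint p q m / p ^ m - qint p q n / p ^ n) • L (m + n) v

lemma Lab_single (p q a b : ℂ) (n k : ℤ) :
    Lab p q a b n (Finsupp.single k 1) = cab p q a b n k • Finsupp.single (k+n) 1 := by
  rw [Lab, Finsupp.lsum_single]; simp

lemma Lab0_apply (p q a b : ℂ) (u : ℤ →₀ ℂ) (j : ℤ) :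
    (Lab p q a b 0 u) j = cab p q a b 0 j * u j := by
  rw [Lab, Finsupp.lsum_apply, Finsupp.sum_apply, Finsupp.sum]
  simp only [LinearMap.smul_apply, Finsupp.lsingle_apply, Finsupp.smul_apply,
    Finsupp.single_apply, add_zero, smul_eq_mul, mul_ite, mul_zero]
  rw [Finset.sum_ite_eq' u.support j (fun i => cab p q a b 0 i * u i)]
  by_cases h : j ∈ u.support
  · simp [h]
  · simp [h, Finsupp.notMem_support_iff.mp h]

lemma key_single_mem (p q a b : ℂ) (U : Submodule ℂ (ℤ →₀ ℂ))
    (hinv0 : ∀ u ∈ U, Lab p q a b 0 u ∈ U)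
    (hc : ∀ k1 k2 : ℤ, cab p q a b 0 k1 = cab p q a b 0 k2 → k1 = k2) :
    ∀ N : ℕ, ∀ u : ℤ →₀ ℂ, u ∈ U → u.support.card ≤ N → ∀ k ∈ u.support,
      Finsupp.single k (1:ℂ) ∈ U := by
  intro N
  induction N with
  | zero =>
    intro u hu hcard k hk
    rw [Nat.le_zero, Finset.card_eq_zero] at hcard
    simp [hcard] at hk
  | succ N ih =>
    intro u hu hcard k hk
    by_cases hone : ∀ j ∈ u.support, j = k
    · have hsub : u.support ⊆ {k} := fun j hj => Finset.mem_singleton.mpr (hone j hj)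
      have hu_eq : u = Finsupp.single k (u k) := Finsupp.eq_single_iff.mpr ⟨hsub, rfl⟩
      have huk : u k ≠ 0 := Finsupp.mem_support_iff.mp hk
      have : (u k)⁻¹ • u ∈ U := U.smul_mem _ hu
      rwa [hu_eq, Finsupp.smul_single, smul_eq_mul, Finsupp.single_eq_same,
        inv_mul_cancel₀ huk] at this
    · push_neg at hone
      obtain ⟨j, hj, hjk⟩ := hone
      set u' : ℤ →₀ ℂ := Lab p q a b 0 u - cab p q a b 0 j • u with hu'def
      have hu' : u' ∈ U := U.sub_mem (hinv0 u hu) (U.smul_mem _ hu)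
      have hcoord : ∀ i, u' i = (cab p q a b 0 i - cab p q a b 0 j) * u i := by
        intro i
        simp [hu'def, Lab0_apply, sub_mul]
      have hsub : u'.support ⊆ u.support.erase j := by
        intro i hi
        rw [Finsupp.mem_support_iff, hcoord] at hi
        rcases mul_ne_zero_iff.mp hi with ⟨h1, h2⟩
        refine Finset.mem_erase.mpr ⟨?_, Finsupp.mem_support_iff.mpr h2⟩
        intro hij; rw [hij] at h1; exact h1 (sub_self _)
      have hcard' : u'.support.card ≤ N := by
        calc u'.support.card ≤ (u.support.erase j).card := Finset.card_le_card hsub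
        _ = u.support.card - 1 := Finset.card_erase_of_mem hj
        _ ≤ N := by omega
      have hk' : k ∈ u'.support := by
        rw [Finsupp.mem_support_iff, hcoord]
        exact mul_ne_zero (fun h => hjk (hc k j (sub_eq_zero.mp h)).symm)
          (Finsupp.mem_support_iff.mp hk)
      exact ih u' hu' hcard' k hk'

lemma cab_zero_eq (p q a b : ℂ) (hp : p ≠ 0) (hq : q ≠ 0) (hpq' : p - q ≠ 0) (k ℓ : ℤ)
    (h : cab p q a b (ℓ - k) k = 0) :
    p^k + b * (p^k * (p^ℓ)⁻¹) * q^ℓ = (1 + a*(p-q) + b) * q^k := by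
  rw [cab, qint, qint, show -k - (ℓ - k) = -ℓ by ring, zpow_neg, zpow_neg,
    zpow_sub₀ hp, zpow_sub₀ hq] at h
  have hk1 : p ^ k ≠ 0 := zpow_ne_zero _ hp
  have hk2 : q ^ k ≠ 0 := zpow_ne_zero _ hq
  have hl1 : p ^ ℓ ≠ 0 := zpow_ne_zero _ hp
  have hl2 : q ^ ℓ ≠ 0 := zpow_ne_zero _ hq
  field_simp at h
  have hfac : (p^k * p^k * q^k * (p-q)) *
      (p^ℓ*(p^k - q^k - a*(p-q)*q^k) - b*(p^ℓ*q^k - p^k*q^ℓ)) = 0 := by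
    linear_combination (p^k * p^k * q^k * (p-q)) * h
  have h' := (mul_eq_zero.mp hfac).resolve_left
    (mul_ne_zero (mul_ne_zero (mul_ne_zero hk1 hk1) hk2) hpq')
  field_simp
  linear_combination h'

/-- If `q/p` is not a root of unity, `a ≠ -1/(p-q)`, and `M_{a,b}` has a nonzero proper
submodule, then `a = -p^{-m}[m]` and `b = -p^{-m} q^m` or `b = 0`, for some `m ∈ ℤ`. -/
theorem Mab_reducible_classification (p q : ℂ) (hp : p ≠ 0) (hq : q ≠ 0) (hpq : p ≠ q)
    (hroot : ∀ n : ℤ, n ≠ 0 → (q / p) ^ n ≠ 1)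
    (a b : ℂ) (ha : a ≠ -1 / (p - q))
    (U : Submodule ℂ (ℤ →₀ ℂ))
    (hinv : ∀ n : ℤ, ∀ u ∈ U, Lab p q a b n u ∈ U)
    (hne_bot : U ≠ ⊥) (hne_top : U ≠ ⊤) :
    ∃ m : ℤ, a = -(p ^ (-m) * qint p q m) ∧
      (b = -(p ^ (-m) * q ^ m) ∨ b = 0) := by
  have hpq' : p - q ≠ 0 := sub_ne_zero.mpr hpq
  have htne : (q / p) ≠ 0 := div_ne_zero hq hp
  have tinj : ∀ k1 k2 : ℤ, (q/p)^k1 = (q/p)^k2 → k1 = k2 := by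
    intro k1 k2 h
    by_contra hne
    apply hroot (k1 - k2) (sub_ne_zero.mpr hne)
    rw [zpow_sub₀ htne, h, div_self (zpow_ne_zero _ htne)]
  have hc0 : ∀ k : ℤ, cab p q a b 0 k = (1 - (q/p)^k)/(p-q) - a * (q/p)^k := by
    intro k
    rw [cab, qint, qint, div_zpow, zpow_neg]
    have hk1 : p ^ k ≠ 0 := zpow_ne_zero _ hp
    field_simp
    simp
  have ha' : a + 1/(p-q) ≠ 0 := by
    intro h0
    apply ha
    field_simp at h0 ⊢
    linear_combination h0
  have hc : ∀ k1 k2 : ℤ, cab p q a b 0 k1 = cab p q a b 0 k2 → k1 = k2 := by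
    intro k1 k2 h
    apply tinj
    rw [hc0, hc0] at h
    have h2 : (a + 1/(p-q)) * ((q/p)^k2 - (q/p)^k1) = 0 := by
      field_simp at h ⊢
      linear_combination h
    exact (sub_eq_zero.mp ((mul_eq_zero.mp h2).resolve_left ha')).symm
  have hsingles : ∀ u ∈ U, ∀ k ∈ u.support, Finsupp.single k (1:ℂ) ∈ U :=
    fun u hu k hk => key_single_mem p q a b U (fun v hv => hinv 0 v hv) hc
      u.support.card u hu le_rfl k hk
  obtain ⟨u0, hu0U, hu0⟩ := (Submodule.ne_bot_iff U).mp hne_bot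
  obtain ⟨k0, hk0⟩ := Finsupp.support_nonempty_iff.mpr hu0
  have hk0U : Finsupp.single k0 (1:ℂ) ∈ U := hsingles u0 hu0U k0 hk0
  obtain ⟨l0, hl0⟩ : ∃ ℓ : ℤ, Finsupp.single ℓ (1:ℂ) ∉ U := by
    by_contra h
    push_neg at h
    apply hne_top
    rw [eq_top_iff]
    intro x _
    rw [← Finsupp.sum_single x, Finsupp.sum]
    refine Submodule.sum_mem U fun i _ => ?_
    have := U.smul_mem (x i) (h i)
    rwa [Finsupp.smul_single, smul_eq_mul, mul_one] at this
  have hvan : ∀ k ℓ : ℤ, Finsupp.single k (1:ℂ) ∈ U → Finsupp.single ℓ (1:ℂ) ∉ U →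
      cab p q a b (ℓ - k) k = 0 := by
    intro k ℓ hkU hℓU
    by_contra hcne
    apply hℓU
    have h1 : Lab p q a b (ℓ - k) (Finsupp.single k 1) ∈ U := hinv _ _ hkU
    rw [Lab_single] at h1
    have h2 := U.smul_mem (cab p q a b (ℓ-k) k)⁻¹ h1
    rwa [smul_smul, inv_mul_cancel₀ hcne, one_smul, show k + (ℓ - k) = ℓ by ring] at h2
  by_cases hb : b = 0
  · refine ⟨-k0, ?_, Or.inr hb⟩
    have h := hvan k0 l0 hk0U hl0
    rw [cab, hb, qint] at h
    rw [qint, neg_neg]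
    have hk1 : p ^ k0 ≠ 0 := zpow_ne_zero _ hp
    have hk2 : q ^ k0 ≠ 0 := zpow_ne_zero _ hq
    have e1 : p ^ k0 * p ^ (-k0) = 1 := by
      rw [← zpow_add₀ hp]; simp
    have e2 : q ^ k0 * q ^ (-k0) = 1 := by
      rw [← zpow_add₀ hq]; simp
    rw [zpow_neg] at h
    field_simp at h ⊢
    linear_combination -q^(-k0) * h - (1 + (p-q)*a) * e2 + e1
  · -- b ≠ 0 case
    have huniq : ∀ ℓ1 ℓ2 : ℤ, Finsupp.single ℓ1 (1:ℂ) ∉ U → Finsupp.single ℓ2 (1:ℂ) ∉ U →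
        ℓ1 = ℓ2 := by
      intro ℓ1 ℓ2 h1 h2
      have e1 := cab_zero_eq p q a b hp hq hpq' k0 ℓ1 (hvan _ _ hk0U h1)
      have e2 := cab_zero_eq p q a b hp hq hpq' k0 ℓ2 (hvan _ _ hk0U h2)
      apply tinj
      have hl11 : p ^ ℓ1 ≠ 0 := zpow_ne_zero _ hp
      have hl21 : p ^ ℓ2 ≠ 0 := zpow_ne_zero _ hp
      have hk1 : p ^ k0 ≠ 0 := zpow_ne_zero _ hp
      have hi1 : p ^ ℓ1 * (p ^ ℓ1)⁻¹ = 1 := mul_inv_cancel₀ hl11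
      have hi2 : p ^ ℓ2 * (p ^ ℓ2)⁻¹ = 1 := mul_inv_cancel₀ hl21
      have h3 : b * (p^k0) * ((q/p)^ℓ1 - (q/p)^ℓ2) = 0 := by
        rw [div_zpow, div_zpow]
        field_simp
        linear_combination (p^ℓ1 * p^ℓ2) * e1 - (p^ℓ1 * p^ℓ2) * e2
          - (b*p^k0*q^ℓ1*p^ℓ2) * hi1 + (b*p^k0*p^ℓ1*q^ℓ2) * hi2
      have h4 := (mul_eq_zero.mp h3).resolve_left (mul_ne_zero hb hk1)
      exact sub_eq_zero.mp h4
    have h1U : Finsupp.single (l0+1) (1:ℂ) ∈ U := by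
      by_contra h; have := huniq _ _ h hl0; omega
    have h2U : Finsupp.single (l0+2) (1:ℂ) ∈ U := by
      by_contra h; have := huniq _ _ h hl0; omega
    have e1 := cab_zero_eq p q a b hp hq hpq' (l0+1) l0 (hvan _ _ h1U hl0)
    have e2 := cab_zero_eq p q a b hp hq hpq' (l0+2) l0 (hvan _ _ h2U hl0)
    have hL1 : p ^ l0 ≠ 0 := zpow_ne_zero _ hp
    have hL2 : q ^ l0 ≠ 0 := zpow_ne_zero _ hq
    rw [zpow_add₀ hp, zpow_add₀ hq] at e1
    simp only [zpow_one] at e1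
    rw [show (l0+2:ℤ) = l0+1+1 by ring] at e2
    rw [zpow_add₀ hp, zpow_add₀ hp, zpow_add₀ hq, zpow_add₀ hq] at e2
    simp only [zpow_one] at e2
    have hinvrel : p ^ l0 * (p ^ l0)⁻¹ = 1 := mul_inv_cancel₀ hL1
    -- derive C = 0
    have hC : 1 + a*(p-q) + b = 0 := by
      have h5 : (1 + a*(p-q) + b) * (q^l0 * q * (p - q)) = 0 := by
        linear_combination e2 - p * e1
      exact (mul_eq_zero.mp h5).resolve_right
        (mul_ne_zero (mul_ne_zero hL2 hq) hpq')
    have hbval : b = -(p ^ l0 * q ^ (-l0)) := by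
      have h6 : b * (p * q ^ l0) = -(p ^ l0 * q ^ (-l0)) * (p * q ^ l0) := by
        have e2' : q ^ l0 * q ^ (-l0) = 1 := by rw [← zpow_add₀ hq]; simp
        rw [hC, zero_mul] at e1
        linear_combination e1 - (b*p*q^l0) * hinvrel + (p^l0*p) * e2'
      exact mul_right_cancel₀ (mul_ne_zero hp hL2) h6
    refine ⟨-l0, ?_, Or.inl (by rwa [neg_neg])⟩
    rw [qint, neg_neg]
    have e3 : p ^ l0 * p ^ (-l0) = 1 := by rw [← zpow_add₀ hp]; simp
    have e4 : q ^ l0 * q ^ (-l0) = 1 := by rw [← zpow_add₀ hq]; simp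
    rw [hbval] at hC
    have hstep : a * (p-q) = -(p^l0 * (p^(-l0) - q^(-l0))) := by
      linear_combination hC + e3
    field_simp
    linear_combination hstep
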